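/- Define D : ℕ → ℕ → ℕ by D(0,0)=1, D(n,0)=1 if n is even and 0 if n is odd (for n>0), and D(n,r) = D(n−2,r) + binom(n−1,r−1) for n ≥ r > 0 (with D(n,r)=0 if n<0 or r>n). Then for every integer p > 0 and all n ≥ 0, J(n+1) = (sum over r from 0 to p−1 of D(n,r)) + sum over k from p to n of binom(k−1, p−1)·J(n+1−k), where J is the Jacobsthal sequence. -/
import Mathlib


def J : ℕ → ℕ
  | 0 => 0
  | 1 => 1
  | n + 2 => J (n + 1) + 2 * J n

def D : ℕ → ℕ → ℕ
  | n, 0 => if n % 2 = 0 then 1 else 0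
  | 0, _ + 1 => 0
  | 1, r + 1 => Nat.choose 0 r
  | n + 2, r + 1 => D n (r + 1) + Nat.choose (n + 1) r

/-- The weighted sum appearing in the theorem. -/
def A (p n : ℕ) : ℕ := ∑ k ∈ Finset.Icc p n, Nat.choose (k - 1) (p - 1) * J (n + 1 - k)

lemma A_rec (p n : ℕ) :
    A (p+1) (n+2) = A (p+1) (n+1) + 2 * A (p+1) n + Nat.choose (n+1) p := by
  unfold A
  simp only [Nat.add_sub_cancel]
  rcases le_or_gt (p+1) (n+2) with h | h
  · rw [Finset.sum_Icc_succ_top h]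
    have key : ∀ k ∈ Finset.Icc (p+1) (n+1),
        Nat.choose (k-1) p * J (n+2+1-k)
        = Nat.choose (k-1) p * J (n+1+1-k) + 2 * (Nat.choose (k-1) p * J (n+1-k)) := by
      intro k hk
      have hk1 := (Finset.mem_Icc.mp hk).1
      have hk2 := (Finset.mem_Icc.mp hk).2
      have e1 : n+2+1-k = (n+1-k) + 2 := by omega
      have e2 : n+1+1-k = (n+1-k) + 1 := by omega
      rw [e1, e2, J]
      ring
    rw [Finset.sum_congr rfl key, Finset.sum_add_distrib]
    have e1 : n+2+1-(n+2) = 1 := by omega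
    have e2 : n+2-1 = n+1 := by omega
    rw [e1, e2]
    have e3 : J 1 = 1 := rfl
    rw [e3, mul_one]
    have e4 : (∑ k ∈ Finset.Icc (p+1) (n+1), 2 * (Nat.choose (k-1) p * J (n+1-k)))
        = 2 * ∑ k ∈ Finset.Icc (p+1) (n+1), Nat.choose (k-1) p * J (n+1-k) := by
      rw [Finset.mul_sum]
    rw [e4]
    rcases le_or_gt (p+1) (n+1) with h2 | h2
    · rw [Finset.sum_Icc_succ_top h2 (f := fun k => Nat.choose (k-1) p * J (n+1-k))]
      have e5 : n+1-(n+1) = 0 := by omega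
      rw [e5]
      have e6 : J 0 = 0 := rfl
      rw [e6, mul_zero, add_zero]
    · have he : Finset.Icc (p+1) (n+1) = ∅ := Finset.Icc_eq_empty (by omega)
      have he2 : Finset.Icc (p+1) n = ∅ := Finset.Icc_eq_empty (by omega)
      rw [he, he2]
  · have he : ∀ m, m ≤ n + 2 → Finset.Icc (p+1) m = ∅ := fun m hm =>
      Finset.Icc_eq_empty (by omega)
    rw [he (n+2) le_rfl, he (n+1) (by omega), he n (by omega)]
    have : Nat.choose (n+1) p = 0 := Nat.choose_eq_zero_of_lt (by omega)
    simp [this]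

lemma DK : ∀ (m p : ℕ), D (m+1) (p+1) + D m (p+1) = Nat.choose (m+1) (p+1)
  | 0, p => by
    cases p with
    | zero => rfl
    | succ q =>
      show Nat.choose 0 (q+1) + 0 = Nat.choose 1 (q+2)
      rw [Nat.choose_eq_zero_of_lt (by omega), Nat.choose_eq_zero_of_lt (by omega)]
  | m+1, p => by
    have ih := DK m p
    show D (m+2) (p+1) + D (m+1) (p+1) = Nat.choose (m+2) (p+1)
    rw [D, Nat.choose_succ_succ (m+1) p]
    simp only [Nat.succ_eq_add_one] at *
    omega

lemma D_eq_zero : ∀ n p, n < p + 1 → D n (p+1) = 0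
  | 0, p, _ => rfl
  | 1, p, h => by
    have hp : 1 ≤ p := by omega
    show Nat.choose 0 p = 0
    exact Nat.choose_eq_zero_of_lt (by omega)
  | n+2, p, h => by
    rw [D, D_eq_zero n p (by omega), Nat.choose_eq_zero_of_lt (by omega)]

lemma D_two_step (n : ℕ) : D (n+2) 0 = D n 0 := by
  simp only [D]
  split_ifs <;> omega

lemma D_parity (n : ℕ) : D (n+1) 0 + D n 0 = 1 := by
  simp only [D]
  split_ifs <;> omega

lemma base_aux : ∀ n, (J (n+1) = D n 0 + A 1 n) ∧ (J (n+2) = D (n+1) 0 + A 1 (n+1))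
  | 0 => by
    constructor
    · show J 1 = D 0 0 + A 1 0
      have : A 1 0 = 0 := by
        unfold A
        rw [Finset.Icc_eq_empty (by omega)]
        simp
      rw [this]
      rfl
    · show J 2 = D 1 0 + A 1 1
      have : A 1 1 = 1 := by
        unfold A
        rw [Finset.Icc_self]
        simp [J]
      rw [this]
      rfl
  | n+1 => by
    obtain ⟨h1, h2⟩ := base_aux n
    refine ⟨h2, ?_⟩
    show J (n+3) = D (n+2) 0 + A 1 (n+2)
    have hA := A_rec 0 n
    rw [Nat.choose_zero_right] at hA
    simp only [Nat.zero_add] at hA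
    have hD2 := D_two_step n
    have hP := D_parity n
    have hJ : J (n+3) = J (n+2) + 2 * J (n+1) := by
      show J (n+1+2) = _
      rw [J]
    omega

lemma A_split_aux : ∀ n, (∀ p, A (p+1) n = D n (p+1) + A (p+2) n) ∧
    (∀ p, A (p+1) (n+1) = D (n+1) (p+1) + A (p+2) (n+1))
  | 0 => by
    constructor
    · intro p
      have h1 : A (p+1) 0 = 0 := by
        unfold A; rw [Finset.Icc_eq_empty (by omega)]; simp
      have h2 : A (p+2) 0 = 0 := by
        unfold A; rw [Finset.Icc_eq_empty (by omega)]; simp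
      rw [h1, h2]
      rfl
    · intro p
      have h2 : A (p+2) 1 = 0 := by
        unfold A; rw [Finset.Icc_eq_empty (by omega)]; simp
      rw [h2, add_zero]
      cases p with
      | zero =>
        have h1 : A 1 1 = 1 := by
          unfold A; rw [Finset.Icc_self]; simp [J]
        rw [h1]; rfl
      | succ q =>
        have h1 : A (q+2) 1 = 0 := by
          unfold A; rw [Finset.Icc_eq_empty (by omega)]; simp
        rw [h1]
        show 0 = Nat.choose 0 (q+1)
        simp
  | n+1 => by
    obtain ⟨ih1, ih2⟩ := A_split_aux n
    refine ⟨ih2, ?_⟩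
    intro p
    have hA1 := A_rec p n
    have hA2 := A_rec (p+1) n
    have hK := DK n p
    have hD : D (n+2) (p+1) = D n (p+1) + Nat.choose (n+1) p := by rw [D]
    have e1 := ih1 p
    have e2 := ih2 p
    have hpas : Nat.choose (n+1) (p+1) + Nat.choose (n+1) p = Nat.choose (n+2) (p+1) := by
      rw [Nat.choose_succ_succ (n+1) p]
      simp only [Nat.succ_eq_add_one]
      omega
    show A (p+1) (n+2) = D (n+2) (p+1) + A (p+2) (n+2)
    simp only [Nat.succ_eq_add_one, show p+1+1 = p+2 from rfl,
      show n+1+1 = n+2 from rfl] at *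
    omega

lemma A_split (p n : ℕ) : A (p+1) n = D n (p+1) + A (p+2) n := (A_split_aux n).1 p

theorem stmt13 (p n : ℕ) (hp : 0 < p) :
    J (n + 1) =
      (∑ r ∈ Finset.range p, D n r) +
        ∑ k ∈ Finset.Icc p n, Nat.choose (k - 1) (p - 1) * J (n + 1 - k) := by
  induction p, hp using Nat.le_induction with
  | base =>
    have h := (base_aux n).1
    rw [Finset.sum_range_one]
    exact h
  | succ p hp ih =>
    obtain ⟨q, rfl⟩ : ∃ q, p = q + 1 := ⟨p - 1, by omega⟩
    rw [Finset.sum_range_succ]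
    have hAs : A (q+1) n = D n (q+1) + A (q+2) n := A_split q n
    have hgoal : (∑ k ∈ Finset.Icc (q+1+1) n, Nat.choose (k-1) (q+1+1-1) * J (n+1-k))
        = A (q+2) n := by
      rfl
    rw [hgoal]
    have hih : (∑ k ∈ Finset.Icc (q+1) n, Nat.choose (k-1) (q+1-1) * J (n+1-k))
        = A (q+1) n := rfl
    rw [hih] at ih
    rw [ih, hAs]
    ring
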